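/- Let p be an odd prime and λ a BG-partition. The following statements are equivalent: (1) ε*_λ = 0; (2) a*_λ is an even integer; (3) Rim*_p(λ) contains no diagonal nodes (i,i); (4) p divides a*_λ. -/

import Mathlib

namespace Mull

/-- A partition of a natural number, encoded as the (0-indexed) weakly decreasing,
eventually-zero sequence of its row lengths.  The Young diagram of `f` is the set
of (0-indexed) nodes `(i, j)` with `j < f i`. -/
def IsPartition (f : ℕ → ℕ) : Prop :=
  Antitone f ∧ ∃ N, f N = 0

/-- The number of nonzero rows of `f`. -/
noncomputable def len (f : ℕ → ℕ) : ℕ :=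
  sInf {N | f N = 0}

/-- The size (number of nodes) of `f`. -/
noncomputable def size (f : ℕ → ℕ) : ℕ :=
  ∑ i ∈ Finset.range (len f), f i

/-- The conjugate (transpose) partition: `conj f j` is the number of rows `i`
with `f i > j`, i.e. the length of the `j`-th column. -/
noncomputable def conj (f : ℕ → ℕ) : ℕ → ℕ :=
  fun j => Nat.card {i | j < f i}

/-- A partition is self-conjugate if it equals its conjugate. -/
def SelfConj (f : ℕ → ℕ) : Prop :=
  conj f = f

/-- The hook length of `f` at the (0-indexed) node `(i, j)`:
in 1-indexed terms this is `λ_i + λ'_j - i - j + 1`. -/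
noncomputable def hook (f : ℕ → ℕ) (i j : ℕ) : ℕ :=
  f i + conj f j - i - j - 1

/-- A BG-partition: a self-conjugate partition none of whose diagonal hook lengths
is divisible by `p`. -/
def IsBG (p : ℕ) (f : ℕ → ℕ) : Prop :=
  IsPartition f ∧ SelfConj f ∧ ∀ i, i < f i → ¬ p ∣ hook f i i

/-- A partition is `p`-regular if it does not have `p` equal nonzero parts. -/
def IsRegular (p : ℕ) (f : ℕ → ℕ) : Prop :=
  ∀ i, f (i + (p - 1)) ≠ 0 → f i ≠ f (i + (p - 1))

/-- The list of nodes of the rim of `f` (nodes `(i, j)` of the diagram such that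
`(i+1, j+1)` is not in the diagram), listed from the top right to the bottom left. -/
noncomputable def rimList (f : ℕ → ℕ) : List (ℕ × ℕ) :=
  (List.range (len f)).flatMap fun i =>
    (List.range (f i - (f (i + 1) - 1))).map fun k => (i, f i - 1 - k)

/-- Auxiliary selection of the `p`-rim from the ordered list of rim nodes (with fuel):
take the next `p`-segment (the next `p` rim nodes), then, if the last selected node is
not in the bottom row, skip the remaining rim nodes lying in the row of the last
selected node and continue from the next row. -/
def pRimAux (p : ℕ) : ℕ → List (ℕ × ℕ) → List (ℕ × ℕ)
  | 0, _ => []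
  | _ + 1, [] => []
  | fuel + 1, c :: L =>
    (c :: L).take p ++
      pRimAux p fuel (((c :: L).drop p).filter
        fun d => (((c :: L).take p).getLastD c).1 < d.1)

/-- The list of nodes of the `p`-rim of `f`, from the top right to the bottom left. -/
noncomputable def pRimList (p : ℕ) (f : ℕ → ℕ) : List (ℕ × ℕ) :=
  pRimAux p (rimList f).length (rimList f)

/-- `f` minus its `p`-rim. -/
noncomputable def removeRim (p : ℕ) (f : ℕ → ℕ) : ℕ → ℕ :=
  fun i => f i - ((pRimList p f).filter fun c => c.1 = i).length

/-- The number of columns of the Mullineux symbol of `f` (i.e. `l + 1`), namely the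
number of times the `p`-rim must be removed to reach the empty partition. -/
noncomputable def steps (p : ℕ) (f : ℕ → ℕ) : ℕ :=
  sInf {k | len ((removeRim p)^[k] f) = 0}

/-- `a_i`: the number of nodes of the `p`-rim of `λ^(i)`. -/
noncomputable def aSeq (p : ℕ) (f : ℕ → ℕ) (i : ℕ) : ℕ :=
  (pRimList p ((removeRim p)^[i] f)).length

/-- `r_i`: the number of nonzero rows of `λ^(i)`. -/
noncomputable def rSeq (p : ℕ) (f : ℕ → ℕ) (i : ℕ) : ℕ :=
  len ((removeRim p)^[i] f)

/-- `ε_i`: `0` if `p ∣ a_i` and `1` otherwise. -/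
noncomputable def epsSeq (p : ℕ) (f : ℕ → ℕ) (i : ℕ) : ℕ :=
  if p ∣ aSeq p f i then 0 else 1

/-- The Mullineux symbol of `f`, recorded as the list of its columns
`(a_i, r_i)` for `0 ≤ i ≤ l`. -/
noncomputable def GSymb (p : ℕ) (f : ℕ → ℕ) : List (ℕ × ℕ) :=
  (List.range (steps p f)).map fun i => (aSeq p f i, rSeq p f i)

/-- The effect of the Mullineux map on one column of the Mullineux symbol:
`(a_i, r_i) ↦ (a_i, s_i)` where `s_i = a_i + ε_i - r_i`. -/
def mullCol (p : ℕ) (c : ℕ × ℕ) : ℕ × ℕ :=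
  (c.1, c.1 + (if p ∣ c.1 then 0 else 1) - c.2)

/-- `f` is a self-Mullineux partition: a `p`-regular partition fixed by the Mullineux
map, i.e. every column of its Mullineux symbol is fixed by `mullCol`. -/
def SelfMull (p : ℕ) (f : ℕ → ℕ) : Prop :=
  IsPartition f ∧ IsRegular p f ∧ (GSymb p f).map (mullCol p) = GSymb p f

/-- `U_λ`: the nodes of the `p`-rim lying on or above the diagonal. -/
noncomputable def UList (p : ℕ) (f : ℕ → ℕ) : List (ℕ × ℕ) :=
  (pRimList p f).filter fun c => c.1 ≤ c.2

/-- The `p`-rim* of a self-conjugate partition: `U_λ ∪ L_λ`, where `L_λ` is the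
reflection of `U_λ` across the diagonal. -/
noncomputable def rimStar (p : ℕ) (f : ℕ → ℕ) : Finset (ℕ × ℕ) :=
  (UList p f).toFinset ∪ (UList p f).toFinset.image fun c => (c.2, c.1)

/-- `a*`: the number of nodes of the `p`-rim*. -/
noncomputable def aStar (p : ℕ) (f : ℕ → ℕ) : ℕ :=
  (rimStar p f).card

/-- `r*`: the number of nodes of `U_λ`. -/
noncomputable def rStar (p : ℕ) (f : ℕ → ℕ) : ℕ :=
  (UList p f).toFinset.card

/-- `ε* = a* mod 2`. -/
noncomputable def epsStar (p : ℕ) (f : ℕ → ℕ) : ℕ :=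
  aStar p f % 2

/-- `λ^(1)*`: `f` minus its `p`-rim*. -/
noncomputable def removeRimStar (p : ℕ) (f : ℕ → ℕ) : ℕ → ℕ :=
  fun i => f i - ((rimStar p f).filter fun c => c.1 = i).card

/-- The number of columns of the BG-symbol of `f`. -/
noncomputable def stepsStar (p : ℕ) (f : ℕ → ℕ) : ℕ :=
  sInf {k | len ((removeRimStar p)^[k] f) = 0}

/-- The BG-symbol of a self-conjugate partition, recorded as the list of its columns
`(a*_i, r*_i)` for `0 ≤ i ≤ l`. -/
noncomputable def BGSymb (p : ℕ) (f : ℕ → ℕ) : List (ℕ × ℕ) :=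
  (List.range (stepsStar p f)).map fun i =>
    (aStar p ((removeRimStar p)^[i] f), rStar p ((removeRimStar p)^[i] f))

/-- The number of diagonal nodes of `f`, i.e. `max {i : λ_i ≥ i}` in 1-indexed terms. -/
noncomputable def kDiag (f : ℕ → ℕ) : ℕ :=
  Nat.card {i | i < f i}

/-- The sequence of diagonal hook lengths of `f` (padded with zeros). -/
noncomputable def diagHooks (f : ℕ → ℕ) : ℕ → ℕ :=
  fun i => if i < f i then hook f i i else 0


/-! ### Auxiliary development for `epsStar_equivalences` -/

/-- The signed diagonal coordinate `i - j` of a node. -/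
def zval (c : ℕ × ℕ) : ℤ := (c.1 : ℤ) - (c.2 : ℤ)

/-- The step relation between consecutive nodes of the rim list. -/
def rstep (f : ℕ → ℕ) (a b : ℕ × ℕ) : Prop :=
  (b.1 = a.1 ∧ a.2 = b.2 + 1) ∨ (b.1 = a.1 + 1 ∧ b.2 = a.2 ∧ a.2 + 1 = f b.1)

theorem rstep_zval {f : ℕ → ℕ} {a b : ℕ × ℕ} (h : rstep f a b) : zval b = zval a + 1 := by
  rcases h with ⟨h1, h2⟩ | ⟨h1, h2, h3⟩ <;> simp only [zval, h1, h2] <;> push_cast <;> omega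

theorem rstep_row {f : ℕ → ℕ} {a b : ℕ × ℕ} (h : rstep f a b) : a.1 ≤ b.1 := by
  rcases h with ⟨h1, h2⟩ | ⟨h1, h2, h3⟩ <;> omega

/-- Invariant for the lists fed to `pRimAux`: a chain of rim steps whose head is the
rightmost node of its row and whose last node is on or below the diagonal. -/
structure GoodL (f : ℕ → ℕ) (M : List (ℕ × ℕ)) : Prop where
  chain : M.Chain' (rstep f)
  headR : ∀ a ∈ M.head?, a.2 + 1 = f a.1
  last0 : ∀ a ∈ M.getLast?, a.2 ≤ a.1

theorem zval_get {f : ℕ → ℕ} {M : List (ℕ × ℕ)} (h : M.Chain' (rstep f)) :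
    ∀ (i : ℕ) (hi : i < M.length),
      zval (M.get ⟨i, hi⟩) = zval (M.get ⟨0, by omega⟩) + i := by
  intro i
  induction i with
  | zero => intro hi; simp
  | succ n ihn =>
    intro hi
    have h1 : n < M.length - 1 := by omega
    have h2 : zval (M.get ⟨n + 1, hi⟩) = zval (M.get ⟨n, by omega⟩) + 1 :=
      rstep_zval (List.isChain_iff_getElem.mp h n (by omega))
    rw [h2, ihn (by omega)]
    push_cast; ring

theorem head?_get0 {M : List (ℕ × ℕ)} {c : ℕ × ℕ} (hc : M.head? = some c)
    (h0 : 0 < M.length) : M.get ⟨0, h0⟩ = c := by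
  cases M with
  | nil => simp at hc
  | cons x L => simpa using hc

theorem mem_below {f : ℕ → ℕ} {M : List (ℕ × ℕ)} (h : M.Chain' (rstep f)) {c : ℕ × ℕ}
    (hc : M.head? = some c) (hlow : c.2 < c.1) : ∀ x ∈ M, x.2 < x.1 := by
  intro x hx
  obtain ⟨⟨i, hi⟩, hget⟩ := List.mem_iff_get.mp hx
  have h0 : 0 < M.length := by omega
  have hz := zval_get h i hi
  rw [head?_get0 hc h0, hget] at hz
  simp only [zval] at hz
  omega

theorem rows_pairwise {f : ℕ → ℕ} {M : List (ℕ × ℕ)} (h : M.Chain' (rstep f)) :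
    M.Pairwise (fun a b => a.1 ≤ b.1) := by
  have : IsTrans (ℕ × ℕ) (fun a b => a.1 ≤ b.1) := ⟨fun _ _ _ h1 h2 => le_trans h1 h2⟩
  exact List.isChain_iff_pairwise.mp (List.IsChain.imp (fun a b hab => rstep_row hab) h)

theorem zval_pairwise {f : ℕ → ℕ} {M : List (ℕ × ℕ)} (h : M.Chain' (rstep f)) :
    M.Pairwise (fun a b => zval a < zval b) := by
  have : IsTrans (ℕ × ℕ) (fun a b => zval a < zval b) := ⟨fun _ _ _ h1 h2 => lt_trans h1 h2⟩
  exact List.isChain_iff_pairwise.mp (List.IsChain.imp (fun a b hab => by rw [rstep_zval hab]; omega) h)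

theorem cntLe {f : ℕ → ℕ} : ∀ (T : List (ℕ × ℕ)), T.Chain' (rstep f) →
    ∀ a, T.head? = some a →
    T.countP (fun c => decide (c.1 ≤ c.2)) = min T.length (a.2 + 1 - a.1) := by
  intro T
  induction T with
  | nil => intro _ a ha; simp at ha
  | cons x T ih =>
    intro hch a ha
    have hax : x = a := by simpa using ha
    subst hax
    rw [List.countP_cons]
    cases T with
    | nil => by_cases hx : x.1 ≤ x.2 <;> simp [hx] <;> omega
    | cons y T' =>
      have hstep : rstep f x y := (List.isChain_cons_cons.mp hch).1
      have ihy := ih (List.isChain_cons_cons.mp hch).2 y rfl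
      rw [ihy]
      simp only [List.length_cons]
      rcases hstep with ⟨h1, h2⟩ | ⟨h1, h2, h3⟩ <;>
        (by_cases hx : x.1 ≤ x.2 <;> simp [hx] <;> omega)

theorem cntEq {f : ℕ → ℕ} : ∀ (T : List (ℕ × ℕ)), T.Chain' (rstep f) →
    ∀ a, T.head? = some a →
    T.countP (fun c => decide (c.1 = c.2)) =
      min T.length (a.2 + 1 - a.1) - min T.length (a.2 - a.1) := by
  intro T
  induction T with
  | nil => intro _ a ha; simp at ha
  | cons x T ih =>
    intro hch a ha
    have hax : x = a := by simpa using ha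
    subst hax
    rw [List.countP_cons]
    cases T with
    | nil =>
      simp only [decide_eq_true_eq, List.countP_nil, List.length_cons, List.length_nil]
      split_ifs <;> omega
    | cons y T' =>
      have hstep : rstep f x y := (List.isChain_cons_cons.mp hch).1
      have ihy := ih (List.isChain_cons_cons.mp hch).2 y rfl
      rw [ihy]
      simp only [List.length_cons]
      rcases hstep with ⟨h1, h2⟩ | ⟨h1, h2, h3⟩ <;>
        (simp only [decide_eq_true_eq]; split_ifs <;> omega)

theorem filter_eq_dropWhile (rho : ℕ) : ∀ (N : List (ℕ × ℕ)),
    N.Pairwise (fun a b => a.1 ≤ b.1) →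
    N.filter (fun d => decide (rho < d.1)) = N.dropWhile (fun d => decide (d.1 ≤ rho)) := by
  intro N
  induction N with
  | nil => simp
  | cons a N ih =>
    intro hp
    rw [List.pairwise_cons] at hp
    by_cases hrho : rho < a.1
    · simp only [List.filter_cons, List.dropWhile_cons, decide_eq_true_eq]
      rw [if_pos hrho, if_neg (by omega : ¬ a.1 ≤ rho)]
      congr 1
      rw [List.filter_eq_self]
      intro b hb
      simpa using lt_of_lt_of_le hrho (hp.1 b hb)
    · simp only [List.filter_cons, List.dropWhile_cons, decide_eq_true_eq]
      rw [if_neg hrho, if_pos (Nat.not_lt.mp hrho)]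
      exact ih hp.2

theorem pRimAux_nil (p fuel : ℕ) : pRimAux p fuel [] = [] := by cases fuel <;> rfl

theorem pRimAux_sublist (p : ℕ) : ∀ (fuel : ℕ) (M : List (ℕ × ℕ)),
    (pRimAux p fuel M).Sublist M := by
  intro fuel
  induction fuel with
  | zero => intro M; simp [pRimAux]
  | succ fuel ih =>
    intro M
    cases M with
    | nil => simp [pRimAux]
    | cons c L =>
      have h1 : pRimAux p (fuel + 1) (c :: L) =
          (c :: L).take p ++ pRimAux p fuel (((c :: L).drop p).filter
            fun d => decide ((((c :: L).take p).getLastD c).1 < d.1)) := rfl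
      rw [h1]
      have h2 : (pRimAux p fuel (((c :: L).drop p).filter
          fun d => decide ((((c :: L).take p).getLastD c).1 < d.1))).Sublist
          ((c :: L).drop p) :=
        (ih _).trans List.filter_sublist
      have h3 := List.Sublist.append (List.Sublist.refl ((c :: L).take p)) h2
      rwa [List.take_append_drop] at h3


theorem main_count (p : ℕ) (hp : 1 ≤ p) (f : ℕ → ℕ) :
    ∀ (fuel : ℕ) (M : List (ℕ × ℕ)), M.length ≤ fuel → GoodL f M →
      (∃ m, (pRimAux p fuel M).countP (fun c => decide (c.1 ≤ c.2)) = p * m ∧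
            (pRimAux p fuel M).countP (fun c => decide (c.1 = c.2)) = 0) ∨
      (∃ m r, r < f r ∧ f r ≤ r + p ∧
            (pRimAux p fuel M).countP (fun c => decide (c.1 ≤ c.2)) = p * m + (f r - r) ∧
            (pRimAux p fuel M).countP (fun c => decide (c.1 = c.2)) ≠ 0) := by
  intro fuel
  induction fuel with
  | zero =>
    intro M _ _
    exact Or.inl ⟨0, by simp [pRimAux], by simp [pRimAux]⟩
  | succ fuel ih =>
    intro M hlen hG
    match M with
    | [] => exact Or.inl ⟨0, by simp [pRimAux], by simp [pRimAux]⟩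
    | c :: L =>
      have hhead : c.2 + 1 = f c.1 := hG.headR c rfl
      have hunf : pRimAux p (fuel + 1) (c :: L) =
          (c :: L).take p ++ pRimAux p fuel (((c :: L).drop p).filter
            fun d => decide ((((c :: L).take p).getLastD c).1 < d.1)) := rfl
      set T := (c :: L).take p with hT
      set rho := (T.getLastD c).1 with hrho
      set rest := ((c :: L).drop p).filter (fun d => decide (rho < d.1)) with hrest
      have hTchain : T.Chain' (rstep f) := hG.chain.take p
      have hThead : T.head? = some c := by
        obtain ⟨p', rfl⟩ : ∃ p', p = p' + 1 := ⟨p - 1, by omega⟩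
        rw [hT, List.take_succ_cons]
        rfl
      have hTlen : T.length = min p (L.length + 1) := by
        rw [hT, List.length_take, List.length_cons]
      have hcLe := cntLe T hTchain c hThead
      have hcEq := cntEq T hTchain c hThead
      -- membership of the recursive output
      have hrecmem : ∀ x ∈ pRimAux p fuel rest, x ∈ (c :: L).drop p := fun x hx =>
        List.mem_of_mem_filter (((pRimAux_sublist p fuel rest).subset) hx)
      by_cases hcc : c.1 ≤ c.2
      · -- head on or above the diagonal
        -- the diagonal node is within the list
        have hlast : (c :: L).getLast (by simp) ∈ (c :: L).getLast? :=
          List.getLast?_eq_getLast (l := c :: L) (by simp)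
        have hlast0 := hG.last0 _ hlast
        have hzlast := zval_get hG.chain ((c :: L).length - 1) (by simp)
        rw [← (show (c :: L).getLast (by simp) = (c :: L).get ⟨(c :: L).length - 1, by simp⟩ from List.getLast_eq_getElem _), head?_get0 (rfl : (c :: L).head? = some c) (by simp)] at hzlast
        have hMlen : c.2 + 1 - c.1 ≤ L.length + 1 := by
          simp only [zval, List.length_cons] at hzlast
          have h2 : ((c :: L).getLast (by simp)).2 ≤ ((c :: L).getLast (by simp)).1 := hlast0
          omega
        -- elements of the dropped part have index ≥ p
        have hdropz : ∀ x ∈ (c :: L).drop p, (x.2 : ℤ) + ((c.1 : ℤ) - c.2) + p ≤ x.1 := by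
          intro x hx
          obtain ⟨⟨k, hk⟩, hget⟩ := List.mem_iff_get.mp hx
          have hpk : p + k < (c :: L).length := by
            rw [List.length_drop] at hk; omega
          have hgd : (List.drop p (c :: L)).get ⟨k, hk⟩ = (c :: L).get ⟨p + k, hpk⟩ :=
            (List.getElem_drop' hpk).symm
          have hz := zval_get hG.chain (p + k) hpk
          rw [head?_get0 (rfl : (c :: L).head? = some c) (by simp)] at hz
          rw [hgd] at hget
          rw [hget] at hz
          simp only [zval] at hz
          omega
        by_cases htp : c.2 + 1 - c.1 ≤ p
        · -- the diagonal node lies in the current segment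
          right
          have hrec0le : (pRimAux p fuel rest).countP (fun c => decide (c.1 ≤ c.2)) = 0 := by
            rw [List.countP_eq_zero]
            intro x hx
            have := hdropz x (hrecmem x hx)
            simp only [decide_eq_true_eq]
            omega
          have hrec0eq : (pRimAux p fuel rest).countP (fun c => decide (c.1 = c.2)) = 0 := by
            rw [List.countP_eq_zero]
            intro x hx
            have := hdropz x (hrecmem x hx)
            simp only [decide_eq_true_eq]
            omega
          refine ⟨0, c.1, by omega, by omega, ?_, ?_⟩
          · rw [hunf, List.countP_append, hrec0le, hcLe, hTlen]
            omega
          · rw [hunf, List.countP_append, hrec0eq, hcEq, hTlen]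
            omega
        · -- full segment above the diagonal; recurse
          have hTfull : T.length = p := by rw [hTlen]; omega
          have hdropPW : ((c :: L).drop p).Pairwise (fun a b => a.1 ≤ b.1) :=
            List.Pairwise.sublist (List.drop_sublist p (c :: L)) (rows_pairwise hG.chain)
          have hdw : rest = ((c :: L).drop p).dropWhile (fun d => decide (d.1 ≤ rho)) := by
            rw [hrest]; exact filter_eq_dropWhile rho _ hdropPW
          have hsuf2 : rest <:+ (c :: L).drop p := by
            rw [hdw]; exact List.dropWhile_suffix _
          have hsuf : rest <:+ (c :: L) := hsuf2.trans (List.drop_suffix p (c :: L))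
          have hGrest : GoodL f rest := by
            refine ⟨hG.chain.suffix hsuf, ?_, ?_⟩
            · -- headR
              intro a ha
              have hamem : a ∈ rest := List.mem_of_mem_head? ha
              have harho : rho < a.1 := by
                have := List.of_mem_filter (hrest ▸ hamem)
                simpa using this
              have hTD : T ++ (c :: L).drop p = c :: L := List.take_append_drop p (c :: L)
              have hchainTD : List.Chain' (rstep f) (T ++ (c :: L).drop p) := by
                rw [hTD]; exact hG.chain
              obtain ⟨-, hchainD, hcross⟩ := List.isChain_append.mp hchainTD
              have hTne : T ≠ [] := by
                intro h
                rw [h] at hThead; simp at hThead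
              have hsplit : ((c :: L).drop p).takeWhile (fun d => decide (d.1 ≤ rho)) ++ rest
                  = (c :: L).drop p := by
                rw [hdw]; exact List.takeWhile_append_dropWhile
              have hgetrho : ∀ x ∈ T.getLast?, x.1 = rho := by
                intro x hx
                rw [List.getLast?_eq_getLast hTne] at hx
                have hx' : T.getLast hTne = x := by simpa using hx
                rw [hrho, List.getLastD_eq_getLast?, List.getLast?_eq_getLast hTne, hx']
                rfl
              cases htw : ((c :: L).drop p).takeWhile (fun d => decide (d.1 ≤ rho)) with
              | nil =>
                have hrD : rest = (c :: L).drop p := by rw [← hsplit, htw]; simp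
                have hstep := hcross (T.getLast hTne) (List.getLast?_eq_getLast hTne) a
                  (by rw [← hrD]; exact ha)
                have hxrho := hgetrho (T.getLast hTne) (List.getLast?_eq_getLast hTne)
                rcases hstep with ⟨h1, h2⟩ | ⟨h1, h2, h3⟩
                · omega
                · omega
              | cons w tw' =>
                have hDsplit : (w :: tw') ++ rest = (c :: L).drop p := by
                  rw [← htw]; exact hsplit
                have hchainD2 : List.Chain' (rstep f) ((w :: tw') ++ rest) := by
                  rw [hDsplit]; exact hchainD
                obtain ⟨-, -, hcross2⟩ := List.isChain_append.mp hchainD2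
                have hlmem : (w :: tw').getLast (by simp) ∈
                    ((c :: L).drop p).takeWhile (fun d => decide (d.1 ≤ rho)) := by
                  rw [htw]; exact List.getLast_mem _
                have hlrho : ((w :: tw').getLast (by simp)).1 ≤ rho := by
                  have := List.mem_takeWhile_imp hlmem
                  simpa using this
                have hstep := hcross2 ((w :: tw').getLast (by simp))
                  (List.getLast?_eq_getLast (l := w :: tw') (by simp)) a ha
                rcases hstep with ⟨h1, h2⟩ | ⟨h1, h2, h3⟩
                · omega
                · omega
            · -- last0
              intro a ha
              obtain ⟨q, hq⟩ := hsuf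
              apply hG.last0
              rw [← hq, List.getLast?_append, ha]
              rfl
          have hrestlen : rest.length ≤ fuel := by
            have h1 : rest.length ≤ ((c :: L).drop p).length := by
              rw [hrest]; exact List.length_filter_le _ _
            rw [List.length_drop, List.length_cons] at h1
            simp only [List.length_cons] at hlen
            omega
          have hTcntLe : T.countP (fun c => decide (c.1 ≤ c.2)) = p := by
            rw [hcLe, hTfull]; omega
          have hTcntEq : T.countP (fun c => decide (c.1 = c.2)) = 0 := by
            rw [hcEq, hTfull]; omega
          rcases ih rest hrestlen hGrest with ⟨m, hm1, hm2⟩ | ⟨m, r, hr1, hr2, hm1, hm2⟩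
          · left
            refine ⟨m + 1, ?_, ?_⟩
            · rw [hunf, List.countP_append, hTcntLe, hm1,
                Nat.mul_succ]
              omega
            · rw [hunf, List.countP_append, hTcntEq, hm2]
          · right
            refine ⟨m + 1, r, hr1, hr2, ?_, ?_⟩
            · rw [hunf, List.countP_append, hTcntLe, hm1,
                Nat.mul_succ]
              omega
            · rw [hunf, List.countP_append, hTcntEq]
              simpa using hm2
      · -- head strictly below the diagonal: everything is below
        left
        have hb := mem_below hG.chain (rfl : (c :: L).head? = some c) (by omega)
        have hxall : ∀ x ∈ pRimAux p (fuel + 1) (c :: L), x.2 < x.1 := by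
          intro x hx
          rw [hunf] at hx
          rcases List.mem_append.mp hx with h | h
          · exact hb x (List.mem_of_mem_take h)
          · exact hb x (List.mem_of_mem_drop (hrecmem x h))
        refine ⟨0, ?_, ?_⟩
        · rw [Nat.mul_zero, List.countP_eq_zero]
          intro x hx
          have := hxall x hx
          simp only [decide_eq_true_eq]
          omega
        · rw [List.countP_eq_zero]
          intro x hx
          have := hxall x hx
          simp only [decide_eq_true_eq]
          omega


theorem rim_good (f : ℕ → ℕ) (hf : IsPartition f) : GoodL f (rimList f) := by
  obtain ⟨hmono, hN⟩ := hf
  have hlen0 : f (len f) = 0 := Nat.sInf_mem hN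
  have hpos : ∀ i, i < len f → 0 < f i := by
    intro i hi
    have h1 : i ∉ {N | f N = 0} := Nat.notMem_of_lt_sInf (by rwa [len] at hi)
    simp only [Set.mem_setOf_eq] at h1
    omega
  set B : ℕ → List (ℕ × ℕ) := fun i =>
    (List.range (f i - (f (i + 1) - 1))).map (fun k => (i, f i - 1 - k)) with hB
  have hflat : rimList f = ((List.range (len f)).map B).flatten := by
    rw [rimList, List.flatMap_def]
  rcases Nat.eq_zero_or_pos (len f) with h0 | h0
  · constructor <;> simp [rimList, h0, List.flatMap, List.Chain']
  obtain ⟨n, hn⟩ : ∃ n, len f = n + 1 := ⟨len f - 1, by omega⟩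
  have hcnt : ∀ i, i < len f → 1 ≤ f i - (f (i + 1) - 1) := by
    intro i hi
    have h1 := hpos i hi
    have h2 := hmono (by omega : i ≤ i + 1)
    omega
  have hBlen : ∀ i, (B i).length = f i - (f (i + 1) - 1) := by
    intro i; simp [hB]
  have hBne : ∀ i, i < len f → B i ≠ [] := by
    intro i hi h
    have h1 := hBlen i
    rw [h, List.length_nil] at h1
    have := hcnt i hi
    omega
  have hBhead : ∀ i, i < len f → (B i).head? = some (i, f i - 1) := by
    intro i hi
    obtain ⟨c', hc'⟩ : ∃ c', f i - (f (i + 1) - 1) = c' + 1 :=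
      ⟨f i - (f (i + 1) - 1) - 1, by have := hcnt i hi; omega⟩
    rw [hB]
    simp only
    rw [hc', List.range_succ_eq_map]
    simp
  have hBlast : ∀ i, i < len f →
      (B i).getLast? = some (i, f i - 1 - (f i - (f (i + 1) - 1) - 1)) := by
    intro i hi
    obtain ⟨c', hc'⟩ : ∃ c', f i - (f (i + 1) - 1) = c' + 1 :=
      ⟨f i - (f (i + 1) - 1) - 1, by have := hcnt i hi; omega⟩
    rw [hB]
    simp only
    rw [hc', List.range_succ, List.map_append]
    simp [hc']
  have hBchain : ∀ i, i < len f → (B i).Chain' (rstep f) := by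
    intro i hi
    rw [hB]
    simp only
    simp only [List.Chain']
    rw [List.isChain_map, List.isChain_iff_getElem]
    intro k hk
    simp only [List.length_range] at hk
    rw [List.getElem_range, List.getElem_range]
    left
    have h1 := hcnt i hi
    have h2 := hpos i hi
    have h3 := hmono (Nat.le_succ i)
    constructor
    · rfl
    · simp only
      omega
  have hnonil : [] ∉ (List.range (len f)).map B := by
    intro h
    obtain ⟨i, hi, hBi⟩ := List.mem_map.mp h
    exact hBne i (List.mem_range.mp hi) hBi
  constructor
  · rw [hflat]
    simp only [List.Chain']
    rw [List.isChain_flatten hnonil]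
    constructor
    · intro l hl
      obtain ⟨i, hi, rfl⟩ := List.mem_map.mp hl
      exact hBchain i (List.mem_range.mp hi)
    · rw [List.isChain_map, hn, List.isChain_range_succ]
      intro m hm
      intro x hx y hy
      rw [hBlast m (by omega)] at hx
      rw [hBhead (m + 1) (by omega)] at hy
      have hx' : (m, f m - 1 - (f m - (f (m + 1) - 1) - 1)) = x := by simpa using hx
      have hy' : (m + 1, f (m + 1) - 1) = y := by simpa using hy
      subst hx'; subst hy'
      right
      have h1 := hcnt m (by omega)
      have h2 := hpos m (by omega)
      have h3 := hpos (m + 1) (by omega)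
      have h4 := hmono (Nat.le_succ m)
      refine ⟨rfl, ?_, ?_⟩ <;> simp only <;> omega
  · intro a ha
    rw [hflat, hn, List.range_succ_eq_map, List.map_cons, List.flatten_cons,
      List.head?_append, hBhead 0 (by omega)] at ha
    have ha' : (0, f 0 - 1) = a := by simpa using ha
    subst ha'
    have := hpos 0 (by omega)
    simp only
    omega
  · intro a ha
    have h1 : f (n + 1) = 0 := by rw [← hn]; exact hlen0
    have h2 := hBlast n (by omega)
    rw [hflat, hn, List.range_succ, List.map_append, List.flatten_append,
      List.getLast?_append] at ha
    simp only [List.map_cons, List.map_nil, List.flatten_cons, List.flatten_nil,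
      List.append_nil] at ha
    rw [h2] at ha
    have ha' : (n, f n - 1 - (f n - (f (n + 1) - 1) - 1)) = a := by
      simpa [Option.or] using ha
    rw [← ha']
    simp only
    omega

theorem diag_count_le_one : ∀ (l : List (ℕ × ℕ)), l.Pairwise (fun a b => zval a < zval b) →
    l.countP (fun c => decide (c.1 = c.2)) ≤ 1 := by
  intro l
  induction l with
  | nil => simp
  | cons x t ih =>
    intro hpw
    rw [List.pairwise_cons] at hpw
    rw [List.countP_cons]
    by_cases hx : x.1 = x.2
    · have h0 : t.countP (fun c => decide (c.1 = c.2)) = 0 := by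
        rw [List.countP_eq_zero]
        intro y hy
        have h1 := hpw.1 y hy
        simp only [zval] at h1
        simp only [decide_eq_true_eq]
        omega
      simp [h0, hx]
    · simp only [hx, decide_eq_true_eq, if_neg hx]
      simpa [hx] using ih hpw.2

/-- Corollary: for a BG-partition `λ`, the following are equivalent:
(1) `ε*_λ = 0`; (2) `a*_λ` is even; (3) the `p`-rim* has no diagonal nodes;
(4) `p ∣ a*_λ`. -/
theorem epsStar_equivalences (p : ℕ) (hp : p.Prime) (hodd : Odd p)
    (f : ℕ → ℕ) (hf : IsBG p f) :
    (epsStar p f = 0 ↔ Even (aStar p f)) ∧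
    (Even (aStar p f) ↔ ∀ i, (i, i) ∉ rimStar p f) ∧
    ((∀ i, (i, i) ∉ rimStar p f) ↔ p ∣ aStar p f) := by
  obtain ⟨hPart, hSC, hBGh⟩ := hf
  have hgood : GoodL f (rimList f) := rim_good f hPart
  have hp1 : 1 ≤ p := hp.pos
  have hmain := main_count p hp1 f (rimList f).length (rimList f) le_rfl hgood
  have hout : pRimAux p (rimList f).length (rimList f) = pRimList p f := rfl
  rw [hout] at hmain
  set out := pRimList p f with hout2
  have houtsub : out.Sublist (rimList f) := pRimAux_sublist p _ _
  have houtpw : out.Pairwise (fun a b => zval a < zval b) :=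
    List.Pairwise.sublist houtsub (zval_pairwise hgood.chain)
  have houtnd : out.Nodup :=
    houtpw.imp fun h => fun he => by rw [he] at h; exact lt_irrefl _ h
  set R := out.countP (fun c => decide (c.1 ≤ c.2)) with hR
  set Dg := out.countP (fun c => decide (c.1 = c.2)) with hDg
  have hUeq : UList p f = out.filter (fun c => decide (c.1 ≤ c.2)) := rfl
  have hUlen : (UList p f).length = R := by
    rw [hUeq, hR, List.countP_eq_length_filter]
  have hUnd : (UList p f).Nodup := by rw [hUeq]; exact houtnd.filter _
  have hrStar : rStar p f = R := by rw [rStar, List.toFinset_card_of_nodup hUnd, hUlen]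
  -- diagonal membership bridge
  have hdiag_mem : ∀ i : ℕ, ((i, i) ∈ rimStar p f ↔ (i, i) ∈ out) := by
    intro i
    rw [rimStar]
    simp only [Finset.mem_union, Finset.mem_image, List.mem_toFinset]
    constructor
    · rintro (h | ⟨c, hc, hce⟩)
      · rw [hUeq] at h; exact List.mem_of_mem_filter h
      · have hcx : c = (i, i) := by
          obtain ⟨a, b⟩ := c
          simp only [Prod.mk.injEq] at hce ⊢
          omega
        rw [hcx] at hc
        rw [hUeq] at hc
        exact List.mem_of_mem_filter hc
    · intro h
      left
      rw [hUeq]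
      exact List.mem_filter.mpr ⟨h, by simp⟩
  have hDg0_iff : Dg = 0 ↔ ∀ i : ℕ, (i, i) ∉ rimStar p f := by
    rw [hDg, List.countP_eq_zero]
    constructor
    · intro h i hi
      have hmem := (hdiag_mem i).mp hi
      have := h _ hmem
      simp at this
    · intro h x hx
      simp only [decide_eq_true_eq]
      intro hxe
      obtain ⟨x1, x2⟩ := x
      simp only at hxe
      subst hxe
      exact h x1 ((hdiag_mem x1).mpr hx)
  -- intersection cardinality
  have hswapinj : Function.Injective (fun c : ℕ × ℕ => (c.2, c.1)) := by
    intro a b h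
    obtain ⟨a1, a2⟩ := a; obtain ⟨b1, b2⟩ := b
    simp only [Prod.mk.injEq] at h ⊢
    omega
  have hDgcard : ((UList p f).toFinset ∩
      (UList p f).toFinset.image (fun c => (c.2, c.1))).card = Dg := by
    have hinter : (UList p f).toFinset ∩ (UList p f).toFinset.image (fun c => (c.2, c.1))
        = ((UList p f).filter (fun c => decide (c.1 = c.2))).toFinset := by
      ext x
      simp only [Finset.mem_inter, Finset.mem_image, List.mem_toFinset, List.mem_filter,
        decide_eq_true_eq]
      constructor
      · rintro ⟨hx, c, hc, hce⟩
        refine ⟨hx, ?_⟩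
        have h1 : x.1 ≤ x.2 := by
          have := List.of_mem_filter (hUeq ▸ hx); simpa using this
        have h2 : c.1 ≤ c.2 := by
          have := List.of_mem_filter (hUeq ▸ hc); simpa using this
        have h3 : c.2 = x.1 := by have := congrArg Prod.fst hce; simpa using this
        have h4 : c.1 = x.2 := by have := congrArg Prod.snd hce; simpa using this
        omega
      · rintro ⟨hx, hxe⟩
        refine ⟨hx, x, hx, ?_⟩
        obtain ⟨x1, x2⟩ := x
        simp only at hxe
        simp [hxe]
    rw [hinter, List.toFinset_card_of_nodup (hUnd.filter _),
      ← List.countP_eq_length_filter, hUeq, List.countP_filter, hDg]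
    apply List.countP_congr
    intro x hx
    simp only [Bool.and_eq_true, decide_eq_true_eq]
    exact ⟨fun h => h.1, fun h => ⟨h, le_of_eq h⟩⟩
  have haStar : aStar p f + Dg = 2 * R := by
    have hcui := Finset.card_union_add_card_inter (UList p f).toFinset
      ((UList p f).toFinset.image (fun c => (c.2, c.1)))
    rw [hDgcard, Finset.card_image_of_injective _ hswapinj,
      List.toFinset_card_of_nodup hUnd, hUlen] at hcui
    have : aStar p f = ((UList p f).toFinset ∪
        (UList p f).toFinset.image fun c => (c.2, c.1)).card := rfl
    omega
  have hDgle : Dg ≤ 1 := diag_count_le_one out houtpw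
  have hiff1 : epsStar p f = 0 ↔ Even (aStar p f) := by
    rw [epsStar, Nat.even_iff]
  rcases hmain with ⟨m, hm1, hm2⟩ | ⟨m, r, hr1, hr2, hm1, hm2⟩
  · -- no diagonal node in the p-rim
    have hA : aStar p f = 2 * (p * m) := by omega
    refine ⟨hiff1, ?_, ?_⟩
    · exact iff_of_true ⟨p * m, by omega⟩ (hDg0_iff.mp hm2)
    · exact iff_of_true (hDg0_iff.mp hm2) ⟨2 * m, by rw [hA]; ring⟩
  · -- the diagonal node is in the p-rim
    have hDg1 : Dg = 1 := le_antisymm hDgle (by omega)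
    have htge : 1 ≤ f r - r := by omega
    have htle : f r - r ≤ p := by omega
    have hA : aStar p f + 1 = 2 * (p * m) + 2 * (f r - r) := by omega
    have hoddA : ¬ Even (aStar p f) := by
      rw [Nat.even_iff]
      omega
    have hdiag : ¬ (∀ i, (i, i) ∉ rimStar p f) := by
      intro h
      rw [← hDg0_iff] at h
      omega
    have hndvd : ¬ p ∣ aStar p f := by
      intro hdvd
      have hkey : aStar p f = p * (2 * m) + (2 * (f r - r) - 1) := by
        have : p * (2 * m) = 2 * (p * m) := by ring
        omega
      have h2t : p ∣ 2 * (f r - r) - 1 := by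
        have h3 := Nat.dvd_sub hdvd (dvd_mul_right p (2 * m))
        rwa [hkey, Nat.add_sub_cancel_left] at h3
      obtain ⟨u, hu⟩ := h2t
      have hu1 : u = 1 := by
        rcases u with _ | _ | v
        · omega
        · rfl
        · exfalso
          have : p * 2 ≤ p * (v + 1 + 1) := Nat.mul_le_mul_left p (by omega)
          omega
      rw [hu1, Nat.mul_one] at hu
      have hhook : hook f r r = 2 * (f r - r) - 1 := by
        rw [hook, hSC]
        omega
      exact hBGh r hr1 (by rw [hhook, ← hu])
    exact ⟨hiff1, iff_of_false hoddA hdiag, iff_of_false hdiag hndvd⟩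


end Mull
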